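/- Let X₁,…,X_m be independent real‑valued random variables with values in [0,1] such that X₁,…,X_n all have the common continuous cumulative distribution function F and X_{n+1},…,X_m all have the common continuous cumulative distribution function G. Fix points 0 = y₀ ≤ y₁ ≤ … ≤ y_e ≤ y_{e+1} = 1 and nonnegative integer vectors (i₀,…,i_{e+1}) with 0 = i₀ ≤ i₁ ≤ … ≤ i_{e+1} = m and (λ₁,…,λ_{e+1}) with λ₁ + … + λ_{e+1} = n and 0 ≤ λ_a ≤ i_a − i_{a−1} for each a. Let A_{i,λ} be the event that, for every a = 1,…,e+1, exactly i_a − i_{a−1} of the random variables X₁,…,X_m take values in the interval (y_{a−1}, y_a], and exactly λ_a of those belong to {X₁,…,X_n}. Then Pr(A_{i,λ}) = n!(m−n)! · ∏_{a=1}^{e+1} [F(y_a) − F(y_{a−1})]^{λ_a} [G(y_a) − G(y_{a−1})]^{i_a − i_{a−1} − λ_a} / ( λ_a! (i_a − i_{a−1} − λ_a)! ). -/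

import Mathlib

/-!
The prescribed cell counts add up to `m`, so on the event every variable lies in exactly one
cell `(y_{a-1}, y_a]`. Recording that cell for each variable, the event is the disjoint union,
over all assignments `f` of the variables to the cells putting exactly `λ_a` variables of the first
population and `i_a - i_{a-1} - λ_a` of the second one into cell `a`, of the events
`{X_j ∈ cell (f j) for all j}`. By independence each of these has probability
`∏_a [F(y_a) - F(y_{a-1})]^{λ_a} [G(y_a) - G(y_{a-1})]^{i_a - i_{a-1} - λ_a}`, and the assignments
are counted population by population: by orbit–stabilizer for the permutations of the variables,
whose stabilizer at an assignment is the product of the permutation groups of its fibres, there are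
`n! / ∏ λ_a!` and `(m - n)! / ∏ (i_a - i_{a-1} - λ_a)!` of them.
-/

open Finset MeasureTheory ProbabilityTheory Function Equiv

section Fibers

variable {α κ : Type*} [Fintype α] [DecidableEq κ]

lemma card_fiber_comp_perm (f : α → κ) (σ : Perm α) (a : κ) :
    #{x | f (σ x) = a} = #{x | f x = a} := by
  simp only [← Fintype.card_subtype]
  exact Fintype.card_congr (σ.subtypeEquiv fun _ => Iff.rfl)

lemma exists_comp_perm_eq_of_card_fiber_eq {f g : α → κ}
    (h : ∀ a, #{x | f x = a} = #{x | g x = a}) : ∃ σ : Perm α, f ∘ σ = g := by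
  have hfib : ∀ a, {x // g x = a} ≃ {x // f x = a} := fun a =>
    Fintype.equivOfCardEq (by simp only [Fintype.card_subtype, h])
  refine ⟨(sigmaFiberEquiv g).symm.trans
    ((sigmaCongrRight hfib).trans (sigmaFiberEquiv f)), funext fun x => ?_⟩
  exact (hfib (g x) ⟨x, rfl⟩).2

lemma mem_orbit_iff_card_fiber_eq {f₀ f : α → κ} :
    f ∈ MulAction.orbit (Perm α)ᵈᵐᵃ f₀ ↔ ∀ a, #{x | f x = a} = #{x | f₀ x = a} := by
  constructor
  · rintro ⟨c, rfl⟩ a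
    exact card_fiber_comp_perm f₀ (DomMulAct.mk.symm c) a
  · intro hf
    obtain ⟨σ, hσ⟩ := exists_comp_perm_eq_of_card_fiber_eq fun a => (hf a).symm
    exact ⟨DomMulAct.mk σ, hσ⟩

lemma exists_card_fiber_eq [Fintype κ] (k : κ → ℕ) (hk : ∑ a, k a = Fintype.card α) :
    ∃ f : α → κ, ∀ a, #{x | f x = a} = k a := by
  let e : α ≃ Σ a, Fin (k a) := Fintype.equivOfCardEq (by simp [hk])
  refine ⟨fun x => (e x).1, fun a => ?_⟩
  rw [← Fintype.card_subtype, ← Fintype.card_fin (k a)]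
  exact Fintype.card_congr ((e.subtypeEquiv fun _ => Iff.rfl).trans (sigmaSubtype a))

theorem card_filter_card_fiber_eq_multinomial [DecidableEq α] [Fintype κ] (k : κ → ℕ)
    (hk : ∑ a, k a = Fintype.card α) :
    #{f : α → κ | ∀ a, #{x | f x = a} = k a} = Nat.multinomial univ k := by
  obtain ⟨f₀, hf₀⟩ := exists_card_fiber_eq k hk
  have horbit : MulAction.orbit (Perm α)ᵈᵐᵃ f₀ = {f : α → κ | ∀ a, #{x | f x = a} = k a} := by
    ext f
    simp only [mem_orbit_iff_card_fiber_eq, hf₀, Set.mem_ofPred_eq]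
  have hstab : Nat.card (MulAction.stabilizer (Perm α)ᵈᵐᵃ f₀) = ∏ a, (k a).factorial := by
    rw [Nat.card_congr (subtypeEquiv (q := fun σ : Perm α => f₀ ∘ σ = f₀) DomMulAct.mk.symm
      fun _ => DomMulAct.mem_stabilizer_iff), Nat.card_eq_fintype_card,
      DomMulAct.stabilizer_card]
    simp only [Fintype.card_subtype, hf₀]
  have hos := Nat.card_congr (MulAction.orbitProdStabilizerEquivGroup (Perm α)ᵈᵐᵃ f₀)
  rw [Nat.card_prod, hstab, horbit, Nat.card_congr DomMulAct.mk.symm, Nat.card_perm,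
    Nat.card_eq_fintype_card (α := α), ← hk, ← Nat.multinomial_spec, mul_comm] at hos
  rw [← Nat.eq_of_mul_eq_mul_left (by positivity) hos, ← Fintype.card_subtype,
    Nat.card_eq_fintype_card]
  rfl

lemma card_filter_subtype_eq (p : α → Prop) [DecidablePred p] (f : α → κ) (a : κ) :
    #{x : {x // p x} | f x = a} = #{x | p x ∧ f x = a} := by
  simp only [← Fintype.card_subtype]
  exact Fintype.card_congr (subtypeSubtypeEquivSubtypeInter p (f · = a))

lemma card_filter_and_add_card_filter_not_and (p q : α → Prop) [DecidablePred p]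
    [DecidablePred q] : #{x | p x ∧ q x} + #{x | ¬p x ∧ q x} = #{x | q x} := by
  rw [← card_filter_add_card_filter_not (s := ({x | q x} : Finset α)) p]
  simp only [filter_filter, and_comm]

lemma card_eq_and_card_and_eq_iff (p q : α → Prop) [DecidablePred p] [DecidablePred q]
    {k l : ℕ} (hlk : l ≤ k) :
    #{x | q x} = k ∧ #{x | p x ∧ q x} = l ↔ #{x | p x ∧ q x} = l ∧ #{x | ¬p x ∧ q x} = k - l := by
  have := card_filter_and_add_card_filter_not_and p q
  omega

variable [DecidableEq α] [Fintype κ]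

def cellAssignments (p : α → Prop) [DecidablePred p] (l l' : κ → ℕ) : Finset (α → κ) :=
  {f | ∀ a, #{x | p x ∧ f x = a} = l a ∧ #{x | ¬p x ∧ f x = a} = l' a}

theorem card_cellAssignments (p : α → Prop) [DecidablePred p] {l l' : κ → ℕ}
    (hl : ∑ a, l a = #{x | p x}) (hl' : ∑ a, l' a = #{x | ¬p x}) :
    #(cellAssignments p l l') = Nat.multinomial univ l * Nat.multinomial univ l' := by
  rw [← card_filter_card_fiber_eq_multinomial (α := {x // p x}) l
      (by rwa [Fintype.card_subtype]),
    ← card_filter_card_fiber_eq_multinomial (α := {x // ¬p x}) l'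
      (by rwa [Fintype.card_subtype]),
    cellAssignments]
  simp only [← Fintype.card_subtype]
  rw [← Fintype.card_prod]
  refine Fintype.card_congr (((piEquivPiSubtypeProd p _).subtypeEquiv fun f => ?_).trans
    subtypeProdEquivProd)
  simp only [piEquivPiSubtypeProd_apply, Fintype.card_subtype, card_filter_subtype_eq, forall_and]

lemma prod_ite_eq_of_mem_cellAssignments {M : Type*} [CommMonoid M] (p : α → Prop)
    [DecidablePred p] {l l' : κ → ℕ} {f : α → κ} (hf : f ∈ cellAssignments p l l')
    (u v : κ → M) :
    ∏ x, (if p x then u (f x) else v (f x)) = ∏ a, u a ^ l a * v a ^ l' a := by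
  have hpow (r : α → Prop) [DecidablePred r] (w : κ → M) :
      ∏ x with r x, w (f x) = ∏ a, w a ^ #{x | r x ∧ f x = a} := by
    rw [← prod_fiberwise _ f]
    refine prod_congr rfl fun a _ => ?_
    rw [filter_filter, prod_congr rfl fun x hx => by rw [(mem_filter.mp hx).2.2], prod_const]
  simp only [cellAssignments, mem_filter] at hf
  rw [prod_ite, hpow, hpow, ← prod_mul_distrib]
  simp only [hf]

end Fibers

section Cells

variable {ι κ β : Type*} [Fintype ι] {C : κ → Set β}

lemma mem_iff_eq_of_mem (hC : Pairwise (Disjoint on C)) {x : β} {a b : κ} (hb : x ∈ C b) :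
    x ∈ C a ↔ b = a :=
  ⟨fun ha => by_contra fun hba => Set.disjoint_left.mp (hC hba) hb ha, fun h => h ▸ hb⟩

variable [∀ a, DecidablePred (· ∈ C a)]

lemma exists_forall_mem_of_sum_card_eq [Fintype κ] [DecidableEq ι]
    (hC : Pairwise (Disjoint on C)) (x : ι → β)
    (h : ∑ a, #{i | x i ∈ C a} = Fintype.card ι) : ∃ f : ι → κ, ∀ i, x i ∈ C (f i) := by
  have hdisj : ((univ : Finset κ) : Set κ).PairwiseDisjoint
      fun a => ({i | x i ∈ C a} : Finset ι) :=
    fun a _ b _ hab => disjoint_filter.mpr fun i _ ha hb => hab ((mem_iff_eq_of_mem hC ha).mp hb)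
  have hcover : univ.biUnion (fun a => ({i | x i ∈ C a} : Finset ι)) = univ :=
    eq_univ_of_card _ (by rw [card_biUnion hdisj, h])
  choose f hf using fun i => by
    simpa using (hcover.symm ▸ mem_univ i : i ∈ univ.biUnion fun a => ({i | x i ∈ C a} : Finset ι))
  exact ⟨f, hf⟩

variable [Fintype κ] [DecidableEq κ] [DecidableEq ι] {Ω : Type*}

lemma setOf_cellCounts_eq_biUnion (hC : Pairwise (Disjoint on C)) (X : ι → Ω → β)
    (p : ι → Prop) [DecidablePred p] {l l' : κ → ℕ} (hll' : ∑ a, (l a + l' a) = Fintype.card ι) :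
    {ω | ∀ a, #{i | p i ∧ X i ω ∈ C a} = l a ∧ #{i | ¬p i ∧ X i ω ∈ C a} = l' a}
      = ⋃ f ∈ cellAssignments p l l', ⋂ i, X i ⁻¹' C (f i) := by
  ext ω
  simp only [Set.mem_ofPred_eq, Set.mem_iUnion, Set.mem_iInter, Set.mem_preimage, exists_prop,
    cellAssignments, mem_filter, mem_univ, true_and]
  constructor
  · intro hω
    obtain ⟨f, hf⟩ := exists_forall_mem_of_sum_card_eq hC (X · ω) <| by
      rw [← hll']
      refine sum_congr rfl fun a _ => ?_
      rw [← card_filter_and_add_card_filter_not_and p, (hω a).1, (hω a).2]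
    refine ⟨f, ?_, hf⟩
    simpa only [fun i a => mem_iff_eq_of_mem hC (hf i) (a := a)] using hω
  · rintro ⟨f, hfT, hf⟩
    simpa only [fun i a => mem_iff_eq_of_mem hC (hf i) (a := a)] using hfT

theorem measureReal_cellCounts_eq [MeasurableSpace Ω] {μ : Measure Ω} [IsFiniteMeasure μ]
    [MeasurableSpace β] {X : ι → Ω → β} (hX : ∀ i, Measurable (X i)) (hXind : iIndepFun X μ)
    (hCm : ∀ a, MeasurableSet (C a)) (hC : Pairwise (Disjoint on C))
    (p : ι → Prop) [DecidablePred p] {l l' : κ → ℕ}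
    (hl : ∑ a, l a = #{i | p i}) (hl' : ∑ a, l' a = #{i | ¬p i}) {u v : κ → ℝ}
    (hu : ∀ i, p i → ∀ a, μ.real (X i ⁻¹' C a) = u a)
    (hv : ∀ i, ¬p i → ∀ a, μ.real (X i ⁻¹' C a) = v a) :
    μ.real {ω | ∀ a, #{i | p i ∧ X i ω ∈ C a} = l a ∧ #{i | ¬p i ∧ X i ω ∈ C a} = l' a}
      = Nat.multinomial univ l * Nat.multinomial univ l' * ∏ a, u a ^ l a * v a ^ l' a := by
  have hll' : ∑ a, (l a + l' a) = Fintype.card ι := by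
    rw [sum_add_distrib, hl, hl', card_filter_add_card_filter_not, card_univ]
  have hcell (f : ι → κ) :
      μ.real (⋂ i, X i ⁻¹' C (f i)) = ∏ i, if p i then u (f i) else v (f i) := by
    rw [measureReal_def, hXind.meas_iInter fun i => ⟨C (f i), hCm (f i), rfl⟩,
      ENNReal.toReal_prod]
    refine prod_congr rfl fun i _ => ?_
    split_ifs with hi
    exacts [hu i hi (f i), hv i hi (f i)]
  have hdisj : ((cellAssignments p l l' : Finset (ι → κ)) : Set (ι → κ)).PairwiseDisjoint
      fun f => ⋂ i, X i ⁻¹' C (f i) := by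
    refine fun f _ g _ hfg => Set.disjoint_left.mpr fun ω hf hg => hfg (funext fun i => ?_)
    simp only [Set.mem_iInter, Set.mem_preimage] at hf hg
    exact (mem_iff_eq_of_mem hC (hf i)).mp (hg i)
  rw [setOf_cellCounts_eq_biUnion hC X p hll',
    measureReal_biUnion_finset hdisj fun f _ => MeasurableSet.iInter fun i => hX i (hCm (f i)),
    sum_congr rfl fun f hf => (hcell f).trans (prod_ite_eq_of_mem_cellAssignments p hf u v),
    sum_const, card_cellAssignments p hl hl', nsmul_eq_mul]
  push_cast
  ring

end Cells

lemma measureReal_preimage_Ioc {Ω : Type*} [MeasurableSpace Ω] {μ : Measure Ω}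
    [IsFiniteMeasure μ] {X : Ω → ℝ} (hX : Measurable X) {a b : ℝ} (hab : a ≤ b) :
    μ.real (X ⁻¹' Set.Ioc a b) = μ.real {ω | X ω ≤ b} - μ.real {ω | X ω ≤ a} := by
  have hdiff : X ⁻¹' Set.Ioc a b = {ω | X ω ≤ b} \ {ω | X ω ≤ a} := by
    ext ω
    simp [and_comm]
  rw [hdiff, measureReal_sdiff (s₁ := {ω | X ω ≤ b}) (s₂ := {ω | X ω ≤ a})
    (fun ω h => le_trans h hab) (hX measurableSet_Iic)]

lemma Fin.sum_succ_sub_castSucc {n : ℕ} {f : Fin (n + 1) → ℕ} (hf : Monotone f) :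
    ∑ i : Fin n, (f i.succ - f i.castSucc) = f (Fin.last n) - f 0 := by
  induction n with
  | zero => simp
  | succ n ih =>
    have hlast := hf (Fin.castSucc_le_succ (Fin.last n))
    have hfirst := hf (Fin.zero_le (Fin.last n).castSucc)
    have hinit := ih (f := f ∘ Fin.castSucc) (hf.comp Fin.strictMono_castSucc.monotone)
    simp only [comp_apply, Fin.castSucc_zero] at hinit
    rw [Fin.sum_univ_castSucc]
    simp only [Fin.succ_castSucc, hinit, Fin.succ_last, Nat.succ_eq_add_one] at hlast ⊢
    omega

lemma Fin.card_filter_not_val_lt {m n : ℕ} : #{i : Fin m | ¬(i : ℕ) < n} = m - n := by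
  have := card_filter_add_card_filter_not (s := univ) fun i : Fin m => (i : ℕ) < n
  rw [Fin.card_filter_val_lt, card_univ, Fintype.card_fin] at this
  omega

lemma Monotone.pairwise_disjoint_on_Ioc_castSucc_succ {α : Type*} [LinearOrder α] {n : ℕ}
    {y : Fin (n + 1) → α} (hy : Monotone y) :
    Pairwise (Disjoint on fun a : Fin n => Set.Ioc (y a.castSucc) (y a.succ)) :=
  (pairwise_disjoint_on _).mpr fun _ _ hab =>
    Set.Ioc_disjoint_Ioc_of_le (hy (Fin.succ_le_castSucc_iff.mpr hab))

theorem stmt2_general {Ω : Type*} [MeasurableSpace Ω] (μ : Measure Ω) [IsProbabilityMeasure μ]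
    (m n e : ℕ)
    (X : Fin m → Ω → ℝ) (hmeas : ∀ i, Measurable (X i))
    (hindep : iIndepFun X μ)
    (F G : ℝ → ℝ)
    (hF : ∀ i : Fin m, (i : ℕ) < n → ∀ x, (μ {ω | X i ω ≤ x}).toReal = F x)
    (hG : ∀ i : Fin m, n ≤ (i : ℕ) → ∀ x, (μ {ω | X i ω ≤ x}).toReal = G x)
    (y : Fin (e + 2) → ℝ) (hy : Monotone y)
    (I : Fin (e + 2) → ℕ) (hI : Monotone I) (hI0 : I 0 = 0) (hIm : I (Fin.last (e + 1)) = m)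
    (lam : Fin (e + 1) → ℕ) (hlamsum : ∑ a, lam a = n)
    (hlam : ∀ a : Fin (e + 1), lam a ≤ I a.succ - I a.castSucc) :
    (μ {ω | ∀ a : Fin (e + 1),
        (Finset.univ.filter fun i : Fin m =>
            X i ω ∈ Set.Ioc (y a.castSucc) (y a.succ)).card = I a.succ - I a.castSucc
        ∧ (Finset.univ.filter fun i : Fin m =>
            (i : ℕ) < n ∧ X i ω ∈ Set.Ioc (y a.castSucc) (y a.succ)).card = lam a}).toReal
      = (n.factorial : ℝ) * ((m - n).factorial : ℝ)
        * ∏ a : Fin (e + 1),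
            (F (y a.succ) - F (y a.castSucc)) ^ lam a
            * (G (y a.succ) - G (y a.castSucc)) ^ (I a.succ - I a.castSucc - lam a)
            / (((lam a).factorial : ℝ)
              * ((I a.succ - I a.castSucc - lam a).factorial : ℝ)) := by
  have hsum : ∑ a : Fin (e + 1), (I a.succ - I a.castSucc) = m := by
    rw [Fin.sum_succ_sub_castSucc hI, hIm, hI0, Nat.sub_zero]
  have hsum' : ∑ a, (I a.succ - I a.castSucc - lam a) = m - n := by
    rw [sum_tsub_distrib _ fun a _ => hlam a, hsum, hlamsum]
  have hlt : #{i : Fin m | (i : ℕ) < n} = n := by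
    rw [Fin.card_filter_val_lt, min_eq_right (hlamsum ▸ hsum ▸ sum_le_sum fun a _ => hlam a)]
  have hcell (i : Fin m) (a : Fin (e + 1)) : μ.real (X i ⁻¹' Set.Ioc (y a.castSucc) (y a.succ))
      = μ.real {ω | X i ω ≤ y a.succ} - μ.real {ω | X i ω ≤ y a.castSucc} :=
    measureReal_preimage_Ioc (hmeas i) (hy (Fin.castSucc_le_succ a))
  simp_rw [← measureReal_def, card_eq_and_card_and_eq_iff _ _ (hlam _)]
  rw [measureReal_cellCounts_eq hmeas hindep (fun a => measurableSet_Ioc)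
      hy.pairwise_disjoint_on_Ioc_castSucc_succ _
      (hlamsum.trans hlt.symm) (hsum'.trans Fin.card_filter_not_val_lt.symm)
      (u := fun a => F (y a.succ) - F (y a.castSucc))
      (v := fun a => G (y a.succ) - G (y a.castSucc))
      (fun i hi a => by simp only [hcell, measureReal_def, hF i hi])
      (fun i hi a => by simp only [hcell, measureReal_def, hG i (not_lt.mp hi)]),
    ← hsum', ← hlamsum, ← Nat.multinomial_spec, ← Nat.multinomial_spec]
  push_cast
  rw [prod_div_distrib, prod_mul_distrib, prod_mul_distrib]
  field_simp

/-- For independent `X₁, …, X_m` in `[0,1]`, where `X₁, …, X_n` have common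
continuous cdf `F` and `X_{n+1}, …, X_m` have common continuous cdf `G`, and for points
`0 = y₀ ≤ y₁ ≤ … ≤ y_{e+1} = 1` and index vectors `i`, `λ` as described, the probability
of the event `A_{i,λ}` (for every `a`, exactly `i_a − i_{a−1}` of the `X`'s fall in
`(y_{a−1}, y_a]`, exactly `λ_a` of which come from the first population) equals
`n!(m−n)! ∏_a [F(y_a) − F(y_{a−1})]^{λ_a} [G(y_a) − G(y_{a−1})]^{i_a−i_{a−1}−λ_a}
  / (λ_a! (i_a−i_{a−1}−λ_a)!)`. -/
theorem stmt2 {Ω : Type*} [MeasurableSpace Ω] (μ : Measure Ω) [IsProbabilityMeasure μ]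
    (m n e : ℕ) (hnm : n ≤ m)
    (X : Fin m → Ω → ℝ) (hmeas : ∀ i, Measurable (X i))
    (hrange : ∀ i ω, X i ω ∈ Set.Icc (0 : ℝ) 1)
    (hindep : iIndepFun X μ)
    (F G : ℝ → ℝ) (hFc : Continuous F) (hGc : Continuous G)
    (hF : ∀ i : Fin m, (i : ℕ) < n → ∀ x, (μ {ω | X i ω ≤ x}).toReal = F x)
    (hG : ∀ i : Fin m, n ≤ (i : ℕ) → ∀ x, (μ {ω | X i ω ≤ x}).toReal = G x)
    (y : Fin (e + 2) → ℝ) (hy : Monotone y) (hy0 : y 0 = 0) (hy1 : y (Fin.last (e + 1)) = 1)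
    (I : Fin (e + 2) → ℕ) (hI : Monotone I) (hI0 : I 0 = 0) (hIm : I (Fin.last (e + 1)) = m)
    (lam : Fin (e + 1) → ℕ) (hlamsum : ∑ a, lam a = n)
    (hlam : ∀ a : Fin (e + 1), lam a ≤ I a.succ - I a.castSucc) :
    (μ {ω | ∀ a : Fin (e + 1),
        (Finset.univ.filter fun i : Fin m =>
            X i ω ∈ Set.Ioc (y a.castSucc) (y a.succ)).card = I a.succ - I a.castSucc
        ∧ (Finset.univ.filter fun i : Fin m =>
            (i : ℕ) < n ∧ X i ω ∈ Set.Ioc (y a.castSucc) (y a.succ)).card = lam a}).toReal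
      = (n.factorial : ℝ) * ((m - n).factorial : ℝ)
        * ∏ a : Fin (e + 1),
            (F (y a.succ) - F (y a.castSucc)) ^ lam a
            * (G (y a.succ) - G (y a.castSucc)) ^ (I a.succ - I a.castSucc - lam a)
            / (((lam a).factorial : ℝ)
              * ((I a.succ - I a.castSucc - lam a).factorial : ℝ)) :=
  stmt2_general μ m n e X hmeas hindep F G hF hG y hy I hI hI0 hIm lam hlamsum hlam
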